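/- arXiv:1512.04403 — 4 statements merged into one kernel-verified Lean document; each statement's English description precedes it below -/
import Mathlib

section
/- Assume condition (PCLI1). Then for every price λ ∈ ℝ and every threshold z ∈ ℝ ∪ {−∞,∞}, the z-policy is P_λ-optimal if and only if sup_{x ≤ z} m(x,z) ≤ λ ≤ inf_{x > z} m(x,z), where the supremum over the empty set is −∞ and the infimum over the empty set is +∞. -/
open MeasureTheory ProbabilityTheory Filter Topology Set

noncomputable section

/-- A restless bandit project: the model data (discount factor `β`, passive/active
Markov transition kernels `κ false`/`κ true`, reward `r` and resource consumption `c`),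
Assumption 1 (the weighted sup-norm conditions for weight `w` and constants `M`, `γ`),
together with the threshold-policy performance metrics `F`, `G` (for `z`-policies,
active iff `x > z`), `Fm`, `Gm` (for `z⁻`-policies, active iff `x ≥ z`), and the
optimal value function `V lam` of the `lam`-price problem, each of which is the
(unique) `w`-bounded measurable solution of its fixed-point equation. -/
structure Bandit where
  β : ℝ
  κ : Bool → Kernel ℝ ℝ
  r : ℝ → Bool → ℝ
  c : ℝ → Bool → ℝ
  w : ℝ → ℝ
  M : ℝ
  γ : ℝ
  F : ℝ → EReal → ℝ
  G : ℝ → EReal → ℝ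
  Fm : ℝ → EReal → ℝ
  Gm : ℝ → EReal → ℝ
  V : ℝ → ℝ → ℝ
  hβ0 : 0 ≤ β
  hβ1 : β < 1
  hκ : ∀ a, IsMarkovKernel (κ a)
  hr_cont : ∀ a, Continuous fun x => r x a
  hc_cont : ∀ a, Continuous fun x => c x a
  hc0 : ∀ x, 0 ≤ c x false
  hc01 : ∀ x, c x false < c x true
  hw_meas : Measurable w
  hw_one : ∀ x, 1 ≤ w x
  hM : 0 < M
  hβγ : β ≤ γ
  hγ1 : γ < 1
  hr_bd : ∀ x a, |r x a| ≤ M * w x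
  hc_bd : ∀ x a, c x a ≤ M * w x
  hw_int : ∀ a x, Integrable w (κ a x)
  hw_drift : ∀ a x, β * ∫ y, w y ∂(κ a x) ≤ γ * w x
  hF_meas : ∀ z, Measurable fun x => F x z
  hG_meas : ∀ z, Measurable fun x => G x z
  hFm_meas : ∀ z, Measurable fun x => Fm x z
  hGm_meas : ∀ z, Measurable fun x => Gm x z
  hV_meas : ∀ lam, Measurable (V lam)
  hF_bdd : ∀ z, ∃ C, ∀ x, |F x z| ≤ C * w x
  hG_bdd : ∀ z, ∃ C, ∀ x, |G x z| ≤ C * w x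
  hFm_bdd : ∀ z, ∃ C, ∀ x, |Fm x z| ≤ C * w x
  hGm_bdd : ∀ z, ∃ C, ∀ x, |Gm x z| ≤ C * w x
  hV_bdd : ∀ lam, ∃ C, ∀ x, |V lam x| ≤ C * w x
  hF_eq : ∀ x z, F x z =
    r x (decide (z < (x : EReal))) +
      β * ∫ y, F y z ∂(κ (decide (z < (x : EReal))) x)
  hG_eq : ∀ x z, G x z =
    c x (decide (z < (x : EReal))) +
      β * ∫ y, G y z ∂(κ (decide (z < (x : EReal))) x)
  hFm_eq : ∀ x z, Fm x z =
    r x (decide (z ≤ (x : EReal))) +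
      β * ∫ y, Fm y z ∂(κ (decide (z ≤ (x : EReal))) x)
  hGm_eq : ∀ x z, Gm x z =
    c x (decide (z ≤ (x : EReal))) +
      β * ∫ y, Gm y z ∂(κ (decide (z ≤ (x : EReal))) x)
  hV_eq : ∀ lam x, V lam x =
    max (r x false - lam * c x false + β * ∫ y, V lam y ∂(κ false x))
        (r x true - lam * c x true + β * ∫ y, V lam y ∂(κ true x))

/-- `ν` is the Lebesgue–Stieltjes measure of the (bounded nonincreasing
right-continuous) function `h`: `ν(z₁,z₂] = h z₁ - h z₂`. -/
def IsLSMeasureOfAnti (h : ℝ → ℝ) (ν : Measure ℝ) : Prop :=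
  ∀ z₁ z₂ : ℝ, z₁ ≤ z₂ → ν (Set.Ioc z₁ z₂) = ENNReal.ofReal (h z₁ - h z₂)

/-- `ν` is the Lebesgue–Stieltjes measure of the (bounded nondecreasing
right-continuous) function `h`: `ν(z₁,z₂] = h z₂ - h z₁`. -/
def IsLSMeasureOfMono (h : ℝ → ℝ) (ν : Measure ℝ) : Prop :=
  ∀ z₁ z₂ : ℝ, z₁ ≤ z₂ → ν (Set.Ioc z₁ z₂) = ENNReal.ofReal (h z₂ - h z₁)

/-- The real interval `(z₁, z₂] ⊆ ℝ` with extended-real endpoints. -/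
def iocR (z₁ z₂ : EReal) : Set ℝ := {y : ℝ | z₁ < (y : EReal) ∧ (y : EReal) ≤ z₂}

/-- `t`-step distribution of the Markov chain with kernel `κ` and initial law `p`. -/
def kerIter (κ : Kernel ℝ ℝ) : ℕ → Measure ℝ → Measure ℝ
  | 0, p => p
  | (t + 1), p => (kerIter κ t p).bind fun x => κ x

namespace Bandit

variable (P : Bandit)

/-- Marginal reward metric `f(x,z)` of the `z`-policy. -/
def f (x : ℝ) (z : EReal) : ℝ :=
  (P.r x true - P.r x false) +
    P.β * ((∫ y, P.F y z ∂(P.κ true x)) - ∫ y, P.F y z ∂(P.κ false x))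

/-- Marginal resource metric `g(x,z)` of the `z`-policy. -/
def g (x : ℝ) (z : EReal) : ℝ :=
  (P.c x true - P.c x false) +
    P.β * ((∫ y, P.G y z ∂(P.κ true x)) - ∫ y, P.G y z ∂(P.κ false x))

/-- Marginal reward metric `f(x,z⁻)` of the `z⁻`-policy. -/
def fm (x : ℝ) (z : EReal) : ℝ :=
  (P.r x true - P.r x false) +
    P.β * ((∫ y, P.Fm y z ∂(P.κ true x)) - ∫ y, P.Fm y z ∂(P.κ false x))

/-- Marginal resource metric `g(x,z⁻)` of the `z⁻`-policy. -/
def gm (x : ℝ) (z : EReal) : ℝ :=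
  (P.c x true - P.c x false) +
    P.β * ((∫ y, P.Gm y z ∂(P.κ true x)) - ∫ y, P.Gm y z ∂(P.κ false x))

/-- Marginal productivity metric `m(x,z) = f(x,z)/g(x,z)`. -/
def m (x : ℝ) (z : EReal) : ℝ := P.f x z / P.g x z

/-- Marginal productivity metric `m(x,z⁻) = f(x,z⁻)/g(x,z⁻)`. -/
def mm (x : ℝ) (z : EReal) : ℝ := P.fm x z / P.gm x z

/-- The marginal productivity (MP) index `m*(x) = m(x,x)`. -/
def mStar (x : ℝ) : ℝ := P.m x (x : EReal)

/-- The active action is `P_lam`-optimal at `x`. -/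
def ActOpt (lam x : ℝ) : Prop :=
  P.r x false - lam * P.c x false + P.β * ∫ y, P.V lam y ∂(P.κ false x) ≤
    P.r x true - lam * P.c x true + P.β * ∫ y, P.V lam y ∂(P.κ true x)

/-- The passive action is `P_lam`-optimal at `x`. -/
def PassOpt (lam x : ℝ) : Prop :=
  P.r x true - lam * P.c x true + P.β * ∫ y, P.V lam y ∂(P.κ true x) ≤
    P.r x false - lam * P.c x false + P.β * ∫ y, P.V lam y ∂(P.κ false x)

/-- The project is indexable with index `ν`. -/
def Indexable (ν : ℝ → ℝ) : Prop :=
  ∀ lam x, (P.ActOpt lam x ↔ lam ≤ ν x) ∧ (P.PassOpt lam x ↔ ν x ≤ lam)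

/-- The `z`-policy is `P_lam`-optimal. -/
def ZPolicyOpt (z : EReal) (lam : ℝ) : Prop :=
  ∀ x, P.F x z - lam * P.G x z = P.V lam x

/-- The `z⁻`-policy is `P_lam`-optimal. -/
def ZmPolicyOpt (z : EReal) (lam : ℝ) : Prop :=
  ∀ x, P.Fm x z - lam * P.Gm x z = P.V lam x

/-- The project is strongly threshold-indexable with index `ν`. -/
def StronglyThresholdIndexable (ν : ℝ → ℝ) : Prop :=
  P.Indexable ν ∧
    ∀ lam : ℝ, ∃ z : EReal, P.ZPolicyOpt z lam ∧ P.ZmPolicyOpt z lam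

/-- PCL-indexability condition (PCLI1). -/
def PCLI1 : Prop := ∀ (x : ℝ) (z : EReal), 0 < P.g x z

/-- PCL-indexability condition (PCLI2). -/
def PCLI2 : Prop :=
  Monotone P.mStar ∧ Continuous P.mStar ∧ BddBelow (Set.range P.mStar)

/-- PCL-indexability condition (PCLI3). -/
def PCLI3 : Prop :=
  ∀ x : ℝ, ∀ ν : Measure ℝ, IsLSMeasureOfAnti (fun z : ℝ => P.G x z) ν →
    ∀ z₁ z₂ : ℝ, z₁ < z₂ →
      P.F x z₂ - P.F x z₁ = -∫ z in Set.Ioc z₁ z₂, P.mStar z ∂ν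

/-- The project is PCL-indexable. -/
def PCLIndexable : Prop := P.PCLI1 ∧ P.PCLI2 ∧ P.PCLI3

/-- Reward metric with initial distribution `p`. -/
def Fp (p : Measure ℝ) (z : EReal) : ℝ := ∫ x, P.F x z ∂p

/-- Resource metric with initial distribution `p`. -/
def Gp (p : Measure ℝ) (z : EReal) : ℝ := ∫ x, P.G x z ∂p

/-- `z⁻`-policy reward metric with initial distribution `p`. -/
def Fmp (p : Measure ℝ) (z : EReal) : ℝ := ∫ x, P.Fm x z ∂p

/-- `z⁻`-policy resource metric with initial distribution `p`. -/
def Gmp (p : Measure ℝ) (z : EReal) : ℝ := ∫ x, P.Gm x z ∂p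

/-- An admissible initial distribution: a probability measure with `∫ w dp < ∞`. -/
def IsInitDist (p : Measure ℝ) : Prop :=
  IsProbabilityMeasure p ∧ Integrable P.w p

/-- The transition kernel of the `z`-policy (active iff `x > z`). -/
def thrKer (z : EReal) : Kernel ℝ ℝ :=
  haveI : DecidablePred (· ∈ {x : ℝ | z < (x : EReal)}) := Classical.decPred _
  Kernel.piecewise
    (show MeasurableSet {x : ℝ | z < (x : EReal)} from
      measurable_coe_real_ereal measurableSet_Ioi)
    (P.κ true) (P.κ false)

/-- The transition kernel of the `z⁻`-policy (active iff `x ≥ z`). -/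
def thrKerM (z : EReal) : Kernel ℝ ℝ :=
  haveI : DecidablePred (· ∈ {x : ℝ | z ≤ (x : EReal)}) := Classical.decPred _
  Kernel.piecewise
    (show MeasurableSet {x : ℝ | z ≤ (x : EReal)} from
      measurable_coe_real_ereal measurableSet_Ici)
    (P.κ true) (P.κ false)

/-- The (discounted) state occupation measure `μ_p^z` of the `z`-policy. -/
def occ (z : EReal) (p : Measure ℝ) : Measure ℝ :=
  Measure.sum fun t : ℕ => ENNReal.ofReal (P.β ^ t) • kerIter (P.thrKer z) t p

/-- The (discounted) state occupation measure `μ_p^{z⁻}` of the `z⁻`-policy. -/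
def occM (z : EReal) (p : Measure ℝ) : Measure ℝ :=
  Measure.sum fun t : ℕ => ENNReal.ofReal (P.β ^ t) • kerIter (P.thrKerM z) t p

end Bandit

/-- Finite-horizon reward metric `F_k(x,z)` (value iteration). -/
def Bandit.Fk (P : Bandit) : ℕ → ℝ → EReal → ℝ
  | 0, x, z => P.r x (decide (z < (x : EReal)))
  | (k + 1), x, z =>
      P.r x (decide (z < (x : EReal))) +
        P.β * ∫ y, Bandit.Fk P k y z ∂(P.κ (decide (z < (x : EReal))) x)

/-- Finite-horizon resource metric `G_k(x,z)` (value iteration). -/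
def Bandit.Gk (P : Bandit) : ℕ → ℝ → EReal → ℝ
  | 0, x, z => P.c x (decide (z < (x : EReal)))
  | (k + 1), x, z =>
      P.c x (decide (z < (x : EReal))) +
        P.β * ∫ y, Bandit.Gk P k y z ∂(P.κ (decide (z < (x : EReal))) x)

/-- Finite-horizon marginal reward metric `f_k(x,z)`. -/
def Bandit.fk (P : Bandit) : ℕ → ℝ → EReal → ℝ
  | 0, x, _ => P.r x true - P.r x false
  | (k + 1), x, z =>
      (P.r x true - P.r x false) +
        P.β * ((∫ y, P.Fk k y z ∂(P.κ true x)) - ∫ y, P.Fk k y z ∂(P.κ false x))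

/-- Finite-horizon marginal resource metric `g_k(x,z)`. -/
def Bandit.gk (P : Bandit) : ℕ → ℝ → EReal → ℝ
  | 0, x, _ => P.c x true - P.c x false
  | (k + 1), x, z =>
      (P.c x true - P.c x false) +
        P.β * ((∫ y, P.Gk k y z ∂(P.κ true x)) - ∫ y, P.Gk k y z ∂(P.κ false x))

namespace Bandit

variable (P : Bandit)

/-- Finite-horizon MP metric `m_k(x,z)`. -/
def mk' (k : ℕ) (x : ℝ) (z : EReal) : ℝ := P.fk k x z / P.gk k x z

/-- Finite-horizon MP index `m*_k(x)`. -/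
def mkStar (k : ℕ) (x : ℝ) : ℝ := P.mk' k x (x : EReal)

/-- `g̲(x,z) = inf_k g_k(x,z)`. -/
def gbar (x : ℝ) (z : EReal) : ℝ := ⨅ k : ℕ, P.gk k x z

end Bandit


section AuxProof

/-- Integrability of `w`-bounded measurable functions under the kernels. -/
private lemma Bandit.integrable_wbd (P : Bandit) {u : ℝ → ℝ} (hu : Measurable u) {C : ℝ}
    (hb : ∀ y, |u y| ≤ C * P.w y) (a : Bool) (x : ℝ) :
    Integrable u (P.κ a x) := by
  refine Integrable.mono ((P.hw_int a x).const_mul C) hu.aestronglyMeasurable ?_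
  filter_upwards with y
  rw [Real.norm_eq_abs, Real.norm_eq_abs]
  exact (hb y).trans (le_abs_self _)

end AuxProof

/-- Under (PCLI1), the `z`-policy is `P_λ`-optimal iff
`sup_{x ≤ z} m(x,z) ≤ λ ≤ inf_{x > z} m(x,z)`. -/
theorem zPolicyOpt_iff_mp_bounds (P : Bandit) (h1 : P.PCLI1)
    (lam : ℝ) (z : EReal) :
    P.ZPolicyOpt z lam ↔
      ((∀ x : ℝ, (x : EReal) ≤ z → P.m x z ≤ lam) ∧
        (∀ x : ℝ, z < (x : EReal) → lam ≤ P.m x z)) := by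
  classical
  obtain ⟨CF, hCF⟩ := P.hF_bdd z
  obtain ⟨CG, hCG⟩ := P.hG_bdd z
  obtain ⟨CV, hCV⟩ := P.hV_bdd lam
  have hw1 : ∀ x, (1 : ℝ) ≤ P.w x := P.hw_one
  have hCF0 : 0 ≤ CF := by nlinarith [hCF 0, abs_nonneg (P.F 0 z), hw1 0]
  have hCG0 : 0 ≤ CG := by nlinarith [hCG 0, abs_nonneg (P.G 0 z), hw1 0]
  have hCV0 : 0 ≤ CV := by nlinarith [hCV 0, abs_nonneg (P.V lam 0), hw1 0]
  have hγ0 : 0 ≤ P.γ := le_trans P.hβ0 P.hβγ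
  set W : ℝ → ℝ := fun x => P.F x z - lam * P.G x z with hWdef
  have intF : ∀ a x, Integrable (fun y => P.F y z) (P.κ a x) :=
    fun a x => P.integrable_wbd (P.hF_meas z) hCF a x
  have intG : ∀ a x, Integrable (fun y => P.G y z) (P.κ a x) :=
    fun a x => P.integrable_wbd (P.hG_meas z) hCG a x
  have intV : ∀ a x, Integrable (P.V lam) (P.κ a x) :=
    fun a x => P.integrable_wbd (P.hV_meas lam) hCV a x
  have intW : ∀ a x, Integrable W (P.κ a x) :=
    fun a x => (intF a x).sub ((intG a x).const_mul lam)
  have hWint : ∀ (a : Bool) (x : ℝ), ∫ y, W y ∂(P.κ a x)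
      = (∫ y, P.F y z ∂(P.κ a x)) - lam * ∫ y, P.G y z ∂(P.κ a x) := by
    intro a x
    have : ∫ y, W y ∂(P.κ a x)
        = ∫ y, (P.F y z - lam * P.G y z) ∂(P.κ a x) := rfl
    rw [this, integral_sub (intF a x) ((intG a x).const_mul lam), integral_const_mul]
  -- action-value difference equals f - lam * g
  have hdiff : ∀ x : ℝ,
      (P.r x true - lam * P.c x true + P.β * ∫ y, W y ∂(P.κ true x))
      - (P.r x false - lam * P.c x false + P.β * ∫ y, W y ∂(P.κ false x))
      = P.f x z - lam * P.g x z := by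
    intro x
    rw [hWint, hWint]
    simp only [Bandit.f, Bandit.g]
    ring
  -- W satisfies the policy fixed-point equation
  have hWeq : ∀ x : ℝ, W x =
      P.r x (decide (z < (x : EReal))) - lam * P.c x (decide (z < (x : EReal)))
      + P.β * ∫ y, W y ∂(P.κ (decide (z < (x : EReal))) x) := by
    intro x
    rw [hWint]
    have hF := P.hF_eq x z
    have hG := P.hG_eq x z
    show P.F x z - lam * P.G x z = _
    rw [hF, hG]
    ring
  -- index inequality reformulations
  have hmle : ∀ x : ℝ, (P.m x z ≤ lam ↔ P.f x z ≤ lam * P.g x z) := by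
    intro x
    exact div_le_iff₀ (h1 x z)
  have hlem : ∀ x : ℝ, (lam ≤ P.m x z ↔ lam * P.g x z ≤ P.f x z) := by
    intro x
    exact le_div_iff₀ (h1 x z)
  constructor
  · -- forward direction
    intro hopt
    have hWV : W = P.V lam := funext fun x => hopt x
    have hVx : ∀ x : ℝ, P.V lam x =
        max (P.r x false - lam * P.c x false + P.β * ∫ y, W y ∂(P.κ false x))
            (P.r x true - lam * P.c x true + P.β * ∫ y, W y ∂(P.κ true x)) := by
      intro x
      rw [hWV]
      exact P.hV_eq lam x
    constructor
    · intro x hx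
      have hd : (decide (z < (x : EReal))) = false :=
        decide_eq_false (not_lt.mpr hx)
      have h0 : W x = P.r x false - lam * P.c x false + P.β * ∫ y, W y ∂(P.κ false x) := by
        have := hWeq x; rwa [hd] at this
      have h2 : P.r x true - lam * P.c x true + P.β * ∫ y, W y ∂(P.κ true x)
          ≤ P.r x false - lam * P.c x false + P.β * ∫ y, W y ∂(P.κ false x) := by
        have h3 := le_max_right
          (P.r x false - lam * P.c x false + P.β * ∫ y, W y ∂(P.κ false x))
          (P.r x true - lam * P.c x true + P.β * ∫ y, W y ∂(P.κ true x))
        rw [← hVx x, ← hopt x] at h3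
        calc P.r x true - lam * P.c x true + P.β * ∫ y, W y ∂(P.κ true x)
            ≤ P.F x z - lam * P.G x z := h3
          _ = W x := rfl
          _ = _ := h0
      rw [hmle x]
      have := hdiff x
      linarith
    · intro x hx
      have hd : (decide (z < (x : EReal))) = true := decide_eq_true hx
      have h0 : W x = P.r x true - lam * P.c x true + P.β * ∫ y, W y ∂(P.κ true x) := by
        have := hWeq x; rwa [hd] at this
      have h2 : P.r x false - lam * P.c x false + P.β * ∫ y, W y ∂(P.κ false x)
          ≤ P.r x true - lam * P.c x true + P.β * ∫ y, W y ∂(P.κ true x) := by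
        have h3 := le_max_left
          (P.r x false - lam * P.c x false + P.β * ∫ y, W y ∂(P.κ false x))
          (P.r x true - lam * P.c x true + P.β * ∫ y, W y ∂(P.κ true x))
        rw [← hVx x, ← hopt x] at h3
        calc P.r x false - lam * P.c x false + P.β * ∫ y, W y ∂(P.κ false x)
            ≤ P.F x z - lam * P.G x z := h3
          _ = W x := rfl
          _ = _ := h0
      rw [hlem x]
      have := hdiff x
      linarith
  · -- converse direction
    rintro ⟨hle, hgt⟩
    -- W satisfies the Bellman equation
    have hWbell : ∀ x : ℝ, W x =
        max (P.r x false - lam * P.c x false + P.β * ∫ y, W y ∂(P.κ false x))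
            (P.r x true - lam * P.c x true + P.β * ∫ y, W y ∂(P.κ true x)) := by
      intro x
      rcases lt_or_ge z (x : EReal) with hx | hx
      · have hd : (decide (z < (x : EReal))) = true := decide_eq_true hx
        have h0 := hWeq x; rw [hd] at h0
        have h2 : lam * P.g x z ≤ P.f x z := (hlem x).mp (hgt x hx)
        have h3 := hdiff x
        rw [h0, max_eq_right (by linarith)]
      · have hd : (decide (z < (x : EReal))) = false :=
          decide_eq_false (not_lt.mpr hx)
        have h0 := hWeq x; rw [hd] at h0
        have h2 : P.f x z ≤ lam * P.g x z := (hmle x).mp (hle x hx)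
        have h3 := hdiff x
        rw [h0, max_eq_left (by linarith)]
    -- contraction argument: W = V
    set C : ℝ := CF + |lam| * CG + CV with hCdef
    have hC0 : 0 ≤ C := by positivity
    have hd_bd : ∀ n : ℕ, ∀ x : ℝ, |W x - P.V lam x| ≤ C * P.γ ^ n * P.w x := by
      intro n
      induction n with
      | zero =>
        intro x
        have h1' : |W x - P.V lam x| ≤ |P.F x z| + |lam| * |P.G x z| + |P.V lam x| := by
          have : W x - P.V lam x = P.F x z + (-(lam * P.G x z)) + (-(P.V lam x)) := by
            show P.F x z - lam * P.G x z - P.V lam x = _; ring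
          rw [this]
          calc |P.F x z + (-(lam * P.G x z)) + (-(P.V lam x))|
              ≤ |P.F x z + (-(lam * P.G x z))| + |(-(P.V lam x))| := abs_add_le _ _
            _ ≤ |P.F x z| + |(-(lam * P.G x z))| + |(-(P.V lam x))| := by
                have := abs_add_le (P.F x z) (-(lam * P.G x z)); linarith
            _ = |P.F x z| + |lam| * |P.G x z| + |P.V lam x| := by
                rw [abs_neg, abs_neg, abs_mul]
        have h2' := hCF x
        have h3' := hCG x
        have h4' := hCV x
        have : |P.F x z| + |lam| * |P.G x z| + |P.V lam x| ≤ C * P.w x := by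
          have hal : 0 ≤ |lam| := abs_nonneg lam
          have := mul_le_mul_of_nonneg_left h3' hal
          rw [hCdef]; nlinarith
        simpa using h1'.trans this
      | succ n ih =>
        intro x
        have key : ∀ a : Bool,
            |(P.r x a - lam * P.c x a + P.β * ∫ y, W y ∂(P.κ a x))
              - (P.r x a - lam * P.c x a + P.β * ∫ y, P.V lam y ∂(P.κ a x))|
            ≤ C * P.γ ^ (n + 1) * P.w x := by
          intro a
          have heq : (P.r x a - lam * P.c x a + P.β * ∫ y, W y ∂(P.κ a x))
              - (P.r x a - lam * P.c x a + P.β * ∫ y, P.V lam y ∂(P.κ a x))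
              = P.β * ∫ y, (W y - P.V lam y) ∂(P.κ a x) := by
            rw [integral_sub (intW a x) (intV a x)]; ring
          rw [heq, abs_mul, abs_of_nonneg P.hβ0]
          have hint1 : Integrable (fun y => |W y - P.V lam y|) (P.κ a x) :=
            ((intW a x).sub (intV a x)).abs
          have hint2 : Integrable (fun y => C * P.γ ^ n * P.w y) (P.κ a x) :=
            (P.hw_int a x).const_mul _
          have hmono : ∫ y, |W y - P.V lam y| ∂(P.κ a x)
              ≤ ∫ y, C * P.γ ^ n * P.w y ∂(P.κ a x) :=
            integral_mono hint1 hint2 fun y => ih y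
          have habs : |∫ y, (W y - P.V lam y) ∂(P.κ a x)|
              ≤ ∫ y, |W y - P.V lam y| ∂(P.κ a x) := by
            simpa [Real.norm_eq_abs] using
              norm_integral_le_integral_norm (fun y => W y - P.V lam y) (μ := P.κ a x)
          have hconst : ∫ y, C * P.γ ^ n * P.w y ∂(P.κ a x)
              = C * P.γ ^ n * ∫ y, P.w y ∂(P.κ a x) := integral_const_mul _ _
          have hdrift := P.hw_drift a x
          have hCγn : 0 ≤ C * P.γ ^ n := mul_nonneg hC0 (pow_nonneg hγ0 n)
          have hβint : P.β * ∫ y, P.w y ∂(P.κ a x) ≤ P.γ * P.w x := hdrift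
          calc P.β * |∫ y, (W y - P.V lam y) ∂(P.κ a x)|
              ≤ P.β * ∫ y, |W y - P.V lam y| ∂(P.κ a x) :=
                mul_le_mul_of_nonneg_left habs P.hβ0
            _ ≤ P.β * (C * P.γ ^ n * ∫ y, P.w y ∂(P.κ a x)) := by
                rw [← hconst]; exact mul_le_mul_of_nonneg_left hmono P.hβ0
            _ = C * P.γ ^ n * (P.β * ∫ y, P.w y ∂(P.κ a x)) := by ring
            _ ≤ C * P.γ ^ n * (P.γ * P.w x) :=
                mul_le_mul_of_nonneg_left hβint hCγn
            _ = C * P.γ ^ (n + 1) * P.w x := by ring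
        have hmax : |W x - P.V lam x| ≤
            max |(P.r x false - lam * P.c x false + P.β * ∫ y, W y ∂(P.κ false x))
              - (P.r x false - lam * P.c x false + P.β * ∫ y, P.V lam y ∂(P.κ false x))|
              |(P.r x true - lam * P.c x true + P.β * ∫ y, W y ∂(P.κ true x))
              - (P.r x true - lam * P.c x true + P.β * ∫ y, P.V lam y ∂(P.κ true x))| := by
          rw [hWbell x, P.hV_eq lam x]
          exact abs_max_sub_max_le_max _ _ _ _
        exact hmax.trans (max_le (key false) (key true))
    intro x
    have hlim : Tendsto (fun n : ℕ => C * P.γ ^ n * P.w x) atTop (nhds 0) := by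
      have h : Tendsto (fun n : ℕ => P.γ ^ n) atTop (nhds 0) :=
        tendsto_pow_atTop_nhds_zero_of_lt_one hγ0 P.hγ1
      have := (h.const_mul C).mul_const (P.w x)
      simpa using this
    have hle0 : |W x - P.V lam x| ≤ 0 :=
      ge_of_tendsto hlim (Filter.Eventually.of_forall fun n => hd_bd n x)
    have : W x = P.V lam x := by
      have := abs_nonpos_iff.mp hle0
      linarith [sub_eq_zero.mp this]
    exact this
end
end

section
/- Suppose the project is strongly threshold-indexable with index λ* : ℝ → ℝ. Then: (a) for every state x, f(x,x) − λ*(x)·g(x,x) = 0 = f(x,x⁻) − λ*(x)·g(x,x⁻); (b) λ*(x) = m*(x) for every x with g(x,x) ≠ 0; (c) if in addition (PCLI1) holds, then λ* = m* on ℝ. -/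
open MeasureTheory ProbabilityTheory Filter Topology Set

noncomputable section

namespace Bandit

variable (P : Bandit)

private lemma abs_sub_le'' (a b : ℝ) : |a - b| ≤ |a| + |b| := by
  rw [sub_eq_add_neg]
  exact (abs_add_le a (-b)).trans_eq (by rw [abs_neg])

lemma integrable_wbdd {h : ℝ → ℝ} (hm : Measurable h)
    {C : ℝ} (hb : ∀ y, |h y| ≤ C * P.w y) (a : Bool) (x : ℝ) :
    Integrable h (P.κ a x) := by
  refine Integrable.mono' ((P.hw_int a x).const_mul C) hm.aestronglyMeasurable ?_
  filter_upwards with y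
  simpa [Real.norm_eq_abs] using hb y

lemma contraction_zero {a : ℝ → Bool} {D : ℝ → ℝ} (hDm : Measurable D)
    {C : ℝ} (hDb : ∀ y, |D y| ≤ C * P.w y)
    (hfix : ∀ y, D y = P.β * ∫ u, D u ∂(P.κ (a y) y)) : ∀ y, D y = 0 := by
  have hγ0 : 0 ≤ P.γ := le_trans P.hβ0 P.hβγ
  have hC0 : 0 ≤ C := by
    have h1 := hDb 0
    have h2 := abs_nonneg (D 0)
    have h3 := P.hw_one 0
    nlinarith
  have key : ∀ n : ℕ, ∀ y, |D y| ≤ C * P.γ ^ n * P.w y := by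
    intro n
    induction n with
    | zero => intro y; simpa using hDb y
    | succ n ih =>
      intro y
      have hInt : Integrable D (P.κ (a y) y) := P.integrable_wbdd hDm hDb _ _
      have habs : |∫ u, D u ∂(P.κ (a y) y)| ≤ ∫ u, |D u| ∂(P.κ (a y) y) := by
        simpa [Real.norm_eq_abs] using
          norm_integral_le_integral_norm (μ := (P.κ (a y) y)) D
      have h2 : ∫ u, |D u| ∂(P.κ (a y) y) ≤
          ∫ u, C * P.γ ^ n * P.w u ∂(P.κ (a y) y) :=
        integral_mono hInt.abs ((P.hw_int (a y) y).const_mul _) ih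
      have h3 : ∫ u, C * P.γ ^ n * P.w u ∂(P.κ (a y) y) =
          C * P.γ ^ n * ∫ u, P.w u ∂(P.κ (a y) y) := integral_const_mul _ _
      have h4 : P.β * ∫ u, P.w u ∂(P.κ (a y) y) ≤ P.γ * P.w y := P.hw_drift (a y) y
      have h1 : |D y| ≤ P.β * ∫ u, |D u| ∂(P.κ (a y) y) := by
        rw [hfix y, abs_mul, abs_of_nonneg P.hβ0]
        exact mul_le_mul_of_nonneg_left habs P.hβ0
      calc |D y| ≤ P.β * ∫ u, |D u| ∂(P.κ (a y) y) := h1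
        _ ≤ P.β * ∫ u, C * P.γ ^ n * P.w u ∂(P.κ (a y) y) :=
            mul_le_mul_of_nonneg_left h2 P.hβ0
        _ = C * P.γ ^ n * (P.β * ∫ u, P.w u ∂(P.κ (a y) y)) := by rw [h3]; ring
        _ ≤ C * P.γ ^ n * (P.γ * P.w y) :=
            mul_le_mul_of_nonneg_left h4 (mul_nonneg hC0 (pow_nonneg hγ0 n))
        _ = C * P.γ ^ (n + 1) * P.w y := by ring
  intro y
  have hlim : Filter.Tendsto (fun n : ℕ => C * P.γ ^ n * P.w y) atTop (nhds 0) := by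
    have h0 : Filter.Tendsto (fun n : ℕ => P.γ ^ n) atTop (nhds 0) :=
      tendsto_pow_atTop_nhds_zero_of_lt_one hγ0 P.hγ1
    have := (h0.const_mul C).mul_const (P.w y)
    simpa using this
  have hle : |D y| ≤ 0 :=
    ge_of_tendsto hlim (Filter.Eventually.of_forall fun n => key n y)
  exact abs_nonpos_iff.mp hle

lemma F_sub_lam_G (lam : ℝ) (z : EReal) (y : ℝ) :
    P.F y z - lam * P.G y z =
      (P.r y (decide (z < (y : EReal))) - lam * P.c y (decide (z < (y : EReal)))) +
        P.β * ∫ u, (P.F u z - lam * P.G u z) ∂(P.κ (decide (z < (y : EReal))) y) := by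
  obtain ⟨CF, hCF⟩ := P.hF_bdd z
  obtain ⟨CG, hCG⟩ := P.hG_bdd z
  have hiF : Integrable (fun u => P.F u z) (P.κ (decide (z < (y : EReal))) y) :=
    P.integrable_wbdd (P.hF_meas z) hCF _ _
  have hiG : Integrable (fun u => P.G u z) (P.κ (decide (z < (y : EReal))) y) :=
    P.integrable_wbdd (P.hG_meas z) hCG _ _
  rw [integral_sub hiF (hiG.const_mul lam), integral_const_mul]
  rw [P.hF_eq y z, P.hG_eq y z]
  ring

lemma Fm_sub_lam_Gm (lam : ℝ) (z : EReal) (y : ℝ) :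
    P.Fm y z - lam * P.Gm y z =
      (P.r y (decide (z ≤ (y : EReal))) - lam * P.c y (decide (z ≤ (y : EReal)))) +
        P.β * ∫ u, (P.Fm u z - lam * P.Gm u z) ∂(P.κ (decide (z ≤ (y : EReal))) y) := by
  obtain ⟨CF, hCF⟩ := P.hFm_bdd z
  obtain ⟨CG, hCG⟩ := P.hGm_bdd z
  have hiF : Integrable (fun u => P.Fm u z) (P.κ (decide (z ≤ (y : EReal))) y) :=
    P.integrable_wbdd (P.hFm_meas z) hCF _ _
  have hiG : Integrable (fun u => P.Gm u z) (P.κ (decide (z ≤ (y : EReal))) y) :=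
    P.integrable_wbdd (P.hGm_meas z) hCG _ _
  rw [integral_sub hiF (hiG.const_mul lam), integral_const_mul]
  rw [P.hFm_eq y z, P.hGm_eq y z]
  ring

lemma V_act {lam y : ℝ} (h : P.ActOpt lam y) :
    P.V lam y = P.r y true - lam * P.c y true + P.β * ∫ u, P.V lam u ∂(P.κ true y) := by
  rw [P.hV_eq lam y]
  exact max_eq_right h

lemma V_pass {lam y : ℝ} (h : P.PassOpt lam y) :
    P.V lam y = P.r y false - lam * P.c y false + P.β * ∫ u, P.V lam u ∂(P.κ false y) := by
  rw [P.hV_eq lam y]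
  exact max_eq_left h

lemma actOpt_of_zPolicyOpt {z : EReal} {lam : ℝ} (hz : P.ZPolicyOpt z lam) (y : ℝ)
    (hy : z < (y : EReal)) : P.ActOpt lam y := by
  have key := P.F_sub_lam_G lam z y
  have hd : decide (z < (y : EReal)) = true := decide_eq_true hy
  rw [hd] at key
  have hcongr : ∫ u, (P.F u z - lam * P.G u z) ∂(P.κ true y) =
      ∫ u, P.V lam u ∂(P.κ true y) :=
    integral_congr_ae (Filter.Eventually.of_forall fun u => hz u)
  have hVy : P.V lam y =
      P.r y true - lam * P.c y true + P.β * ∫ u, P.V lam u ∂(P.κ true y) := by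
    rw [← hz y, key, hcongr]
  show _ ≤ _
  calc P.r y false - lam * P.c y false + P.β * ∫ u, P.V lam u ∂(P.κ false y)
      ≤ max (P.r y false - lam * P.c y false + P.β * ∫ u, P.V lam u ∂(P.κ false y))
          (P.r y true - lam * P.c y true + P.β * ∫ u, P.V lam u ∂(P.κ true y)) :=
        le_max_left _ _
    _ = P.V lam y := (P.hV_eq lam y).symm
    _ = _ := hVy

lemma passOpt_of_zPolicyOpt {z : EReal} {lam : ℝ} (hz : P.ZPolicyOpt z lam) (y : ℝ)
    (hy : (y : EReal) ≤ z) : P.PassOpt lam y := by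
  have key := P.F_sub_lam_G lam z y
  have hd : decide (z < (y : EReal)) = false := decide_eq_false (not_lt.mpr hy)
  rw [hd] at key
  have hcongr : ∫ u, (P.F u z - lam * P.G u z) ∂(P.κ false y) =
      ∫ u, P.V lam u ∂(P.κ false y) :=
    integral_congr_ae (Filter.Eventually.of_forall fun u => hz u)
  have hVy : P.V lam y =
      P.r y false - lam * P.c y false + P.β * ∫ u, P.V lam u ∂(P.κ false y) := by
    rw [← hz y, key, hcongr]
  show _ ≤ _
  calc P.r y true - lam * P.c y true + P.β * ∫ u, P.V lam u ∂(P.κ true y)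
      ≤ max (P.r y false - lam * P.c y false + P.β * ∫ u, P.V lam u ∂(P.κ false y))
          (P.r y true - lam * P.c y true + P.β * ∫ u, P.V lam u ∂(P.κ true y)) :=
        le_max_right _ _
    _ = P.V lam y := (P.hV_eq lam y).symm
    _ = _ := hVy

lemma lamStar_mono {lamStar : ℝ → ℝ} (h : P.StronglyThresholdIndexable lamStar) :
    Monotone lamStar := by
  intro y1 y2 hle
  by_contra hlt
  push_neg at hlt
  set lam' := (lamStar y2 + lamStar y1) / 2 with hlam'
  obtain ⟨z, hz, -⟩ := h.2 lam'
  have h1 : lam' < lamStar y1 := by rw [hlam']; linarith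
  have h2 : lamStar y2 < lam' := by rw [hlam']; linarith
  have hy2z : (y2 : EReal) ≤ z := by
    by_contra hc
    push_neg at hc
    have := ((h.1 lam' y2).1).1 (P.actOpt_of_zPolicyOpt hz y2 hc)
    linarith
  have hzy1 : z < (y1 : EReal) := by
    by_contra hc
    push_neg at hc
    have := ((h.1 lam' y1).2).1 (P.passOpt_of_zPolicyOpt hz y1 hc)
    linarith
  have hcoe : (y1 : EReal) ≤ (y2 : EReal) := EReal.coe_le_coe_iff.mpr hle
  exact absurd (lt_of_lt_of_le hzy1 (le_trans hcoe hy2z)) (lt_irrefl z)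

lemma key_eq {lamStar : ℝ → ℝ} (h : P.StronglyThresholdIndexable lamStar) (x : ℝ) :
    (∀ y, P.F y (x : EReal) - lamStar x * P.G y (x : EReal) = P.V (lamStar x) y) ∧
    (∀ y, P.Fm y (x : EReal) - lamStar x * P.Gm y (x : EReal) = P.V (lamStar x) y) := by
  have hmono := P.lamStar_mono h
  set lam := lamStar x with hlam
  obtain ⟨CV, hCV⟩ := P.hV_bdd lam
  have hiV : ∀ (a : Bool) (y : ℝ), Integrable (P.V lam) (P.κ a y) :=
    fun a y => P.integrable_wbdd (P.hV_meas lam) hCV a y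
  constructor
  · obtain ⟨CF, hCF⟩ := P.hF_bdd (x : EReal)
    obtain ⟨CG, hCG⟩ := P.hG_bdd (x : EReal)
    have hbd : ∀ y, |P.F y (x : EReal) - lam * P.G y (x : EReal) - P.V lam y| ≤
        (CF + |lam| * CG + CV) * P.w y := by
      intro y
      have t1 := abs_sub_le'' (P.F y (x : EReal) - lam * P.G y (x : EReal)) (P.V lam y)
      have t2 := abs_sub_le'' (P.F y (x : EReal)) (lam * P.G y (x : EReal))
      have t3 : |lam * P.G y (x : EReal)| ≤ |lam| * (CG * P.w y) := by
        rw [abs_mul]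
        exact mul_le_mul_of_nonneg_left (hCG y) (abs_nonneg lam)
      have := hCF y; have := hCV y
      nlinarith
    have hzero : ∀ y, P.F y (x : EReal) - lam * P.G y (x : EReal) - P.V lam y = 0 := by
      refine P.contraction_zero (a := fun y => decide ((x : EReal) < (y : EReal)))
        (D := fun y => P.F y (x : EReal) - lam * P.G y (x : EReal) - P.V lam y)
        (((P.hF_meas _).sub ((P.hG_meas _).const_mul lam)).sub (P.hV_meas lam))
        hbd ?_
      intro y
      have hiF : Integrable (fun u => P.F u (x : EReal))
          (P.κ (decide ((x : EReal) < (y : EReal))) y) :=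
        P.integrable_wbdd (P.hF_meas _) hCF _ _
      have hiG : Integrable (fun u => P.G u (x : EReal))
          (P.κ (decide ((x : EReal) < (y : EReal))) y) :=
        P.integrable_wbdd (P.hG_meas _) hCG _ _
      have hFy := P.F_sub_lam_G lam (x : EReal) y
      have hVy : P.V lam y = P.r y (decide ((x : EReal) < (y : EReal)))
          - lam * P.c y (decide ((x : EReal) < (y : EReal)))
          + P.β * ∫ u, P.V lam u ∂(P.κ (decide ((x : EReal) < (y : EReal))) y) := by
        by_cases hxy : (x : EReal) < (y : EReal)
        · have hd : decide ((x : EReal) < (y : EReal)) = true := decide_eq_true hxy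
          rw [hd]
          refine P.V_act ?_
          exact ((h.1 lam y).1).2 (hlam ▸ hmono (le_of_lt (EReal.coe_lt_coe_iff.mp hxy)))
        · have hd : decide ((x : EReal) < (y : EReal)) = false := decide_eq_false hxy
          rw [hd]
          refine P.V_pass ?_
          have hyx : y ≤ x := EReal.coe_le_coe_iff.mp (not_lt.mp hxy)
          exact ((h.1 lam y).2).2 (hlam ▸ hmono hyx)
      have hiD : Integrable (fun u => P.F u (x : EReal) - lam * P.G u (x : EReal))
          (P.κ (decide ((x : EReal) < (y : EReal))) y) := hiF.sub (hiG.const_mul lam)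
      rw [integral_sub hiD (hiV _ y)]
      rw [hFy, hVy]
      ring
    intro y
    have := hzero y
    linarith
  · obtain ⟨CF, hCF⟩ := P.hFm_bdd (x : EReal)
    obtain ⟨CG, hCG⟩ := P.hGm_bdd (x : EReal)
    have hbd : ∀ y, |P.Fm y (x : EReal) - lam * P.Gm y (x : EReal) - P.V lam y| ≤
        (CF + |lam| * CG + CV) * P.w y := by
      intro y
      have t1 := abs_sub_le'' (P.Fm y (x : EReal) - lam * P.Gm y (x : EReal)) (P.V lam y)
      have t2 := abs_sub_le'' (P.Fm y (x : EReal)) (lam * P.Gm y (x : EReal))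
      have t3 : |lam * P.Gm y (x : EReal)| ≤ |lam| * (CG * P.w y) := by
        rw [abs_mul]
        exact mul_le_mul_of_nonneg_left (hCG y) (abs_nonneg lam)
      have := hCF y; have := hCV y
      nlinarith
    have hzero : ∀ y, P.Fm y (x : EReal) - lam * P.Gm y (x : EReal) - P.V lam y = 0 := by
      refine P.contraction_zero (a := fun y => decide ((x : EReal) ≤ (y : EReal)))
        (D := fun y => P.Fm y (x : EReal) - lam * P.Gm y (x : EReal) - P.V lam y)
        (((P.hFm_meas _).sub ((P.hGm_meas _).const_mul lam)).sub (P.hV_meas lam))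
        hbd ?_
      intro y
      have hiF : Integrable (fun u => P.Fm u (x : EReal))
          (P.κ (decide ((x : EReal) ≤ (y : EReal))) y) :=
        P.integrable_wbdd (P.hFm_meas _) hCF _ _
      have hiG : Integrable (fun u => P.Gm u (x : EReal))
          (P.κ (decide ((x : EReal) ≤ (y : EReal))) y) :=
        P.integrable_wbdd (P.hGm_meas _) hCG _ _
      have hFy := P.Fm_sub_lam_Gm lam (x : EReal) y
      have hVy : P.V lam y = P.r y (decide ((x : EReal) ≤ (y : EReal)))
          - lam * P.c y (decide ((x : EReal) ≤ (y : EReal)))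
          + P.β * ∫ u, P.V lam u ∂(P.κ (decide ((x : EReal) ≤ (y : EReal))) y) := by
        by_cases hxy : (x : EReal) ≤ (y : EReal)
        · have hd : decide ((x : EReal) ≤ (y : EReal)) = true := decide_eq_true hxy
          rw [hd]
          refine P.V_act ?_
          exact ((h.1 lam y).1).2 (hlam ▸ hmono (EReal.coe_le_coe_iff.mp hxy))
        · have hd : decide ((x : EReal) ≤ (y : EReal)) = false := decide_eq_false hxy
          rw [hd]
          refine P.V_pass ?_
          have hyx : y ≤ x := le_of_lt (EReal.coe_lt_coe_iff.mp (not_le.mp hxy))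
          exact ((h.1 lam y).2).2 (hlam ▸ hmono hyx)
      have hiD : Integrable (fun u => P.Fm u (x : EReal) - lam * P.Gm u (x : EReal))
          (P.κ (decide ((x : EReal) ≤ (y : EReal))) y) := hiF.sub (hiG.const_mul lam)
      rw [integral_sub hiD (hiV _ y)]
      rw [hFy, hVy]
      ring
    intro y
    have := hzero y
    linarith

end Bandit

/-- For a strongly threshold-indexable project with index `λ*`:
(a) `f(x,x) − λ*(x) g(x,x) = 0 = f(x,x⁻) − λ*(x) g(x,x⁻)`;
(b) `λ*(x) = m*(x)` whenever `g(x,x) ≠ 0`; (c) under (PCLI1), `λ* = m*`. -/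
theorem index_eq_mpIndex_of_stronglyThresholdIndexable (P : Bandit)
    (lamStar : ℝ → ℝ) (h : P.StronglyThresholdIndexable lamStar) :
    (∀ x : ℝ, P.f x x - lamStar x * P.g x x = 0 ∧
      P.fm x x - lamStar x * P.gm x x = 0) ∧
    (∀ x : ℝ, P.g x x ≠ 0 → lamStar x = P.mStar x) ∧
    (P.PCLI1 → lamStar = P.mStar) := by
  have hkey := P.key_eq h
  have part_a : ∀ x : ℝ, P.f x x - lamStar x * P.g x x = 0 ∧
      P.fm x x - lamStar x * P.gm x x = 0 := by
    intro x
    set lam := lamStar x with hlam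
    have hA : P.ActOpt lam x := ((h.1 lam x).1).mpr le_rfl
    have hP : P.PassOpt lam x := ((h.1 lam x).2).mpr le_rfl
    have hAle : P.r x false - lam * P.c x false + P.β * ∫ u, P.V lam u ∂(P.κ false x) ≤
        P.r x true - lam * P.c x true + P.β * ∫ u, P.V lam u ∂(P.κ true x) := hA
    have hPle : P.r x true - lam * P.c x true + P.β * ∫ u, P.V lam u ∂(P.κ true x) ≤
        P.r x false - lam * P.c x false + P.β * ∫ u, P.V lam u ∂(P.κ false x) := hP
    have heq := le_antisymm hAle hPle
    constructor
    · have hIV : ∀ a : Bool, (∫ u, P.F u (x : EReal) ∂(P.κ a x)) -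
          lam * ∫ u, P.G u (x : EReal) ∂(P.κ a x) = ∫ u, P.V lam u ∂(P.κ a x) := by
        intro a
        obtain ⟨CF, hCF⟩ := P.hF_bdd (x : EReal)
        obtain ⟨CG, hCG⟩ := P.hG_bdd (x : EReal)
        have hiF := P.integrable_wbdd (P.hF_meas (x : EReal)) hCF a x
        have hiG := P.integrable_wbdd (P.hG_meas (x : EReal)) hCG a x
        rw [← integral_const_mul, ← integral_sub hiF (hiG.const_mul lam)]
        exact integral_congr_ae (Filter.Eventually.of_forall fun u => (hkey x).1 u)
      have hexp : P.f x (x : EReal) - lam * P.g x (x : EReal) =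
          (P.r x true - lam * P.c x true + P.β *
            ((∫ u, P.F u (x : EReal) ∂(P.κ true x)) -
              lam * ∫ u, P.G u (x : EReal) ∂(P.κ true x)))
          - (P.r x false - lam * P.c x false + P.β *
            ((∫ u, P.F u (x : EReal) ∂(P.κ false x)) -
              lam * ∫ u, P.G u (x : EReal) ∂(P.κ false x))) := by
        simp only [Bandit.f, Bandit.g]; ring
      rw [hexp, hIV true, hIV false]
      linarith
    · have hIV : ∀ a : Bool, (∫ u, P.Fm u (x : EReal) ∂(P.κ a x)) -
          lam * ∫ u, P.Gm u (x : EReal) ∂(P.κ a x) = ∫ u, P.V lam u ∂(P.κ a x) := by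
        intro a
        obtain ⟨CF, hCF⟩ := P.hFm_bdd (x : EReal)
        obtain ⟨CG, hCG⟩ := P.hGm_bdd (x : EReal)
        have hiF := P.integrable_wbdd (P.hFm_meas (x : EReal)) hCF a x
        have hiG := P.integrable_wbdd (P.hGm_meas (x : EReal)) hCG a x
        rw [← integral_const_mul, ← integral_sub hiF (hiG.const_mul lam)]
        exact integral_congr_ae (Filter.Eventually.of_forall fun u => (hkey x).2 u)
      have hexp : P.fm x (x : EReal) - lam * P.gm x (x : EReal) =
          (P.r x true - lam * P.c x true + P.β *
            ((∫ u, P.Fm u (x : EReal) ∂(P.κ true x)) -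
              lam * ∫ u, P.Gm u (x : EReal) ∂(P.κ true x)))
          - (P.r x false - lam * P.c x false + P.β *
            ((∫ u, P.Fm u (x : EReal) ∂(P.κ false x)) -
              lam * ∫ u, P.Gm u (x : EReal) ∂(P.κ false x))) := by
        simp only [Bandit.fm, Bandit.gm]; ring
      rw [hexp, hIV true, hIV false]
      linarith
  have part_b : ∀ x : ℝ, P.g x x ≠ 0 → lamStar x = P.mStar x := by
    intro x hg
    have hfa := (part_a x).1
    have hf : P.f x (x : EReal) = lamStar x * P.g x (x : EReal) := by linarith
    unfold Bandit.mStar Bandit.m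
    rw [hf, mul_div_assoc, div_self hg, mul_one]
  refine ⟨part_a, part_b, ?_⟩
  intro hp
  funext x
  exact part_b x (ne_of_gt (hp x (x : EReal)))
end
end

section
/- For every initial distribution p on ℝ with ∫ w dp < ∞ and all thresholds −∞ ≤ z₁ < z₂ ≤ ∞: F(p,z₁) − F(p,z₂) = ∫_{(z₁,z₂]} f(y,z₂) μ_p^{z₁}(dy) = ∫_{(z₁,z₂]} f(y,z₁) μ_p^{z₂}(dy), and G(p,z₁) − G(p,z₂) = ∫_{(z₁,z₂]} g(y,z₂) μ_p^{z₁}(dy) = ∫_{(z₁,z₂]} g(y,z₁) μ_p^{z₂}(dy). -/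
open MeasureTheory ProbabilityTheory Filter Topology Set

noncomputable section

/-! The two threshold policies `z₁ < z₂` differ only on `(z₁, z₂]`, so the difference
`u = F(·,z₁) - F(·,z₂)` (likewise for `G`) solves the Poisson equation
`u = 1_{(z₁,z₂]} f(·,z₂) + β κ_{z₁} u` of the `z₁`-policy, and symmetrically
`u = 1_{(z₁,z₂]} f(·,z₁) + β κ_{z₂} u`. The occupation measure satisfies `μ = p + β (κ ∘ₘ μ)`
and integrates `w` (by the drift condition, `βᵗ ∫ w d(pκᵗ) ≤ γᵗ ∫ w dp`), so integrating a
`w`-bounded solution of `u = h + β κ u` against `μ` gives `∫ u dp = ∫ h dμ`. -/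

def IsWeightBounded {α : Type*} (w v : α → ℝ) : Prop := ∃ C, ∀ x, |v x| ≤ C * w x

section WeightBounded

variable {α : Type*} {w u v : α → ℝ}

lemma IsWeightBounded.sub (hu : IsWeightBounded w u) (hv : IsWeightBounded w v) :
    IsWeightBounded w (u - v) := by
  obtain ⟨C, hC⟩ := hu
  obtain ⟨D, hD⟩ := hv
  exact ⟨C + D, fun x => (abs_sub _ _).trans (by rw [add_mul]; exact add_le_add (hC x) (hD x))⟩

lemma IsWeightBounded.integrable [MeasurableSpace α] {μ : Measure α} (hv : IsWeightBounded w v)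
    (hm : AEStronglyMeasurable v μ) (hw : Integrable w μ) : Integrable v μ :=
  let ⟨C, hC⟩ := hv
  (hw.const_mul C).mono' hm (ae_of_all _ hC)

end WeightBounded

section Composition

variable {α β ι : Type*} [MeasurableSpace α] [MeasurableSpace β]
  {κ : Kernel α β} {μ : Measure α} {f : β → ℝ} {c : ℝ}

lemma MeasureTheory.Measure.comp_sum [Countable ι] (ν : ι → Measure α) :
    κ ∘ₘ Measure.sum ν = Measure.sum fun i => κ ∘ₘ ν i := by
  ext s hs
  simp only [Measure.bind_apply hs κ.aemeasurable, Measure.sum_apply _ hs,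
    lintegral_sum_measure]

lemma MeasureTheory.Measure.integral_smul_comp (hc : 0 ≤ c)
    (hf : Integrable f (ENNReal.ofReal c • (κ ∘ₘ μ))) :
    ∫ y, f y ∂(ENNReal.ofReal c • (κ ∘ₘ μ)) = ∫ x, c * ∫ y, f y ∂κ x ∂μ := by
  rcases hc.eq_or_lt with rfl | hc
  · simp
  rw [integrable_smul_measure (by simpa using hc) ENNReal.ofReal_ne_top] at hf
  rw [integral_smul_measure, ENNReal.toReal_ofReal hc.le, integral_const_mul, smul_eq_mul,
    Measure.comp_eq_comp_const_apply, Kernel.integral_comp]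
  · simp
  · rwa [← Measure.comp_eq_comp_const_apply]

lemma MeasureTheory.Integrable.integral_smul_comp (hc : 0 ≤ c)
    (hf : Integrable f (ENNReal.ofReal c • (κ ∘ₘ μ))) :
    Integrable (fun x => c * ∫ y, f y ∂κ x) μ := by
  rcases hc.eq_or_lt with rfl | hc
  · simp
  rw [integrable_smul_measure (by simpa using hc) ENNReal.ofReal_ne_top,
    Measure.comp_eq_comp_const_apply] at hf
  simpa using hf.integral_comp.const_mul c

end Composition

def occMeasure (β : ℝ) (κ : Kernel ℝ ℝ) (p : Measure ℝ) : Measure ℝ :=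
  Measure.sum fun t : ℕ => ENNReal.ofReal (β ^ t) • kerIter κ t p

section Occupation

variable {w u h : ℝ → ℝ} {β γ : ℝ} {κ : Kernel ℝ ℝ} {p : Measure ℝ}

lemma kerIter_succ (t : ℕ) : kerIter κ (t + 1) p = κ ∘ₘ kerIter κ t p := by
  rw [kerIter]

lemma occMeasure_eq_add_comp (hβ : 0 ≤ β) :
    occMeasure β κ p = p + ENNReal.ofReal β • (κ ∘ₘ occMeasure β κ p) := by
  ext s hs
  unfold occMeasure
  rw [Measure.comp_sum, Measure.add_apply, Measure.smul_apply, Measure.sum_apply _ hs,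
    Measure.sum_apply _ hs]
  simp only [Measure.comp_smul, Measure.smul_apply, smul_eq_mul, ← kerIter_succ]
  rw [tsum_eq_zero_add' ENNReal.summable]
  simp only [← ENNReal.tsum_mul_left, ← mul_assoc, ← ENNReal.ofReal_mul hβ, ← pow_succ']
  rw [pow_zero, ENNReal.ofReal_one, one_mul, kerIter]

lemma lintegral_kerIter_le (hw : Measurable w) (hβ : 0 ≤ β) (hγ : 0 ≤ γ)
    (hdrift : ∀ x, ENNReal.ofReal β * ∫⁻ y, ENNReal.ofReal (w y) ∂κ x
      ≤ ENNReal.ofReal γ * ENNReal.ofReal (w x)) (t : ℕ) :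
    ENNReal.ofReal (β ^ t) * ∫⁻ x, ENNReal.ofReal (w x) ∂kerIter κ t p
      ≤ ENNReal.ofReal (γ ^ t) * ∫⁻ x, ENNReal.ofReal (w x) ∂p := by
  induction t with
  | zero => simp [kerIter]
  | succ t ih =>
    have hstep : ENNReal.ofReal β * ∫⁻ x, ENNReal.ofReal (w x) ∂kerIter κ (t + 1) p
        ≤ ENNReal.ofReal γ * ∫⁻ x, ENNReal.ofReal (w x) ∂kerIter κ t p := by
      rw [kerIter_succ, Measure.lintegral_bind κ.aemeasurable hw.ennreal_ofReal.aemeasurable,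
        ← lintegral_const_mul _ (Measurable.lintegral_kernel hw.ennreal_ofReal),
        ← lintegral_const_mul _ hw.ennreal_ofReal]
      exact lintegral_mono hdrift
    calc ENNReal.ofReal (β ^ (t + 1)) * ∫⁻ x, ENNReal.ofReal (w x) ∂kerIter κ (t + 1) p
        = ENNReal.ofReal (β ^ t) * (ENNReal.ofReal β
            * ∫⁻ x, ENNReal.ofReal (w x) ∂kerIter κ (t + 1) p) := by
          rw [pow_succ, ENNReal.ofReal_mul (pow_nonneg hβ t), mul_assoc]
      _ ≤ ENNReal.ofReal (β ^ t) * (ENNReal.ofReal γ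
            * ∫⁻ x, ENNReal.ofReal (w x) ∂kerIter κ t p) := by gcongr
      _ = ENNReal.ofReal γ * (ENNReal.ofReal (β ^ t)
            * ∫⁻ x, ENNReal.ofReal (w x) ∂kerIter κ t p) := mul_left_comm _ _ _
      _ ≤ ENNReal.ofReal (γ ^ (t + 1)) * ∫⁻ x, ENNReal.ofReal (w x) ∂p := by
          rw [pow_succ', ENNReal.ofReal_mul hγ, mul_assoc]
          gcongr

lemma integrable_occMeasure (hw : Measurable w) (hw0 : 0 ≤ w) (hβ : 0 ≤ β) (hγ : 0 ≤ γ)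
    (hγ1 : γ < 1) (hκw : ∀ x, Integrable w (κ x))
    (hdrift : ∀ x, β * ∫ y, w y ∂κ x ≤ γ * w x) (hp : Integrable w p) :
    Integrable w (occMeasure β κ p) := by
  have hdrift' : ∀ x, ENNReal.ofReal β * ∫⁻ y, ENNReal.ofReal (w y) ∂κ x
      ≤ ENNReal.ofReal γ * ENNReal.ofReal (w x) := fun x => by
    rw [← ofReal_integral_eq_lintegral_ofReal (hκw x) (ae_of_all _ hw0),
      ← ENNReal.ofReal_mul hβ, ← ENNReal.ofReal_mul hγ]
    exact ENNReal.ofReal_le_ofReal (hdrift x)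
  refine ⟨hw.aestronglyMeasurable, ?_⟩
  rw [hasFiniteIntegral_iff_ofReal (ae_of_all _ hw0), occMeasure, lintegral_sum_measure]
  calc ∑' t, ∫⁻ x, ENNReal.ofReal (w x) ∂(ENNReal.ofReal (β ^ t) • kerIter κ t p)
      ≤ ∑' t, ENNReal.ofReal γ ^ t * ∫⁻ x, ENNReal.ofReal (w x) ∂p := by
        refine ENNReal.tsum_le_tsum fun t => ?_
        rw [lintegral_smul_measure, ← ENNReal.ofReal_pow hγ]
        exact lintegral_kerIter_le hw hβ hγ hdrift' t
    _ = (1 - ENNReal.ofReal γ)⁻¹ * ∫⁻ x, ENNReal.ofReal (w x) ∂p := by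
        rw [ENNReal.tsum_mul_right, ENNReal.tsum_geometric]
    _ < ⊤ := ENNReal.mul_lt_top
        (ENNReal.inv_lt_top.2 (tsub_pos_of_lt (ENNReal.ofReal_lt_one.2 hγ1)))
        hp.lintegral_lt_top

theorem integral_eq_integral_occMeasure (hw : Measurable w) (hw0 : 0 ≤ w) (hβ : 0 ≤ β)
    (hγ : 0 ≤ γ) (hγ1 : γ < 1) (hκw : ∀ x, Integrable w (κ x))
    (hdrift : ∀ x, β * ∫ y, w y ∂κ x ≤ γ * w x) (hp : Integrable w p)
    (hu : Measurable u) (hub : IsWeightBounded w u)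
    (heq : ∀ x, u x = h x + β * ∫ y, u y ∂κ x) :
    ∫ x, u x ∂p = ∫ x, h x ∂(occMeasure β κ p) := by
  set μ := occMeasure β κ p
  have hμ : μ = p + ENNReal.ofReal β • (κ ∘ₘ μ) := occMeasure_eq_add_comp hβ
  have hu_int : Integrable u μ :=
    hub.integrable hu.aestronglyMeasurable
      (integrable_occMeasure hw hw0 hβ hγ hγ1 hκw hdrift hp)
  obtain ⟨hu_p, hu_comp⟩ := integrable_add_measure.1 (hμ ▸ hu_int)
  have hsplit := integral_add_measure hu_p hu_comp
  rw [← hμ, Measure.integral_smul_comp hβ hu_comp] at hsplit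
  calc ∫ x, u x ∂p = ∫ x, u x ∂μ - ∫ x, β * ∫ y, u y ∂κ x ∂μ := by rw [hsplit]; ring
    _ = ∫ x, h x ∂μ := by
      rw [← integral_sub hu_int (hu_comp.integral_smul_comp hβ)]
      exact integral_congr_ae (ae_of_all _ fun x => by simp only [heq x]; ring)

lemma measurableSet_iocR (z₁ z₂ : EReal) : MeasurableSet (iocR z₁ z₂) :=
  measurable_coe_real_ereal measurableSet_Ioc

lemma sub_eq_indicator_iocR {z₁ z₂ : EReal} (h : z₁ < z₂) (Q : Bool → ℝ → ℝ) (x : ℝ) :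
    Q (decide (z₁ < x)) x - Q (decide (z₂ < x)) x
      = (iocR z₁ z₂).indicator (fun y => Q true y - Q false y) x := by
  by_cases h₁ : z₁ < x <;> by_cases h₂ : z₂ < x
  · simp [iocR, h₁, h₂]
  · simp [iocR, h₁, h₂, not_lt.1 h₂]
  · exact absurd (h.trans h₂) h₁
  · simp [iocR, h₁, h₂]

namespace Bandit

variable (P : Bandit)

def actionValue (R : ℝ → Bool → ℝ) (v : ℝ → ℝ) (a : Bool) (x : ℝ) : ℝ :=
  R x a + P.β * ∫ y, v y ∂P.κ a x

-- `P.f x z` and `P.g x z` are definitionally `P.marginal P.r (P.F · z) x` and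
-- `P.marginal P.c (P.G · z) x`.
def marginal (R : ℝ → Bool → ℝ) (v : ℝ → ℝ) (x : ℝ) : ℝ :=
  (R x true - R x false) + P.β * ((∫ y, v y ∂P.κ true x) - ∫ y, v y ∂P.κ false x)

lemma actionValue_true_sub_false (R : ℝ → Bool → ℝ) (v : ℝ → ℝ) (x : ℝ) :
    P.actionValue R v true x - P.actionValue R v false x = P.marginal R v x := by
  unfold actionValue marginal
  ring

lemma actionValue_sub_actionValue_left {R : ℝ → Bool → ℝ} {v₁ v₂ : ℝ → ℝ} {a b : Bool} {x : ℝ}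
    (h₁ : Integrable v₁ (P.κ a x)) (h₂ : Integrable v₂ (P.κ a x)) :
    P.actionValue R v₁ a x - P.actionValue R v₂ b x
      = (P.actionValue R v₂ a x - P.actionValue R v₂ b x)
        + P.β * ∫ y, (v₁ y - v₂ y) ∂P.κ a x := by
  unfold actionValue
  rw [integral_sub h₁ h₂]
  ring

lemma actionValue_sub_actionValue_right {R : ℝ → Bool → ℝ} {v₁ v₂ : ℝ → ℝ} {a b : Bool} {x : ℝ}
    (h₁ : Integrable v₁ (P.κ b x)) (h₂ : Integrable v₂ (P.κ b x)) :
    P.actionValue R v₁ a x - P.actionValue R v₂ b x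
      = (P.actionValue R v₁ a x - P.actionValue R v₁ b x)
        + P.β * ∫ y, (v₁ y - v₂ y) ∂P.κ b x := by
  unfold actionValue
  rw [integral_sub h₁ h₂]
  ring

lemma thrKer_apply (z : EReal) (x : ℝ) : P.thrKer z x = P.κ (decide (z < x)) x := by
  by_cases hx : z < (x : EReal) <;> simp [thrKer, Kernel.piecewise_apply, hx]

lemma integral_eq_setIntegral_occ {u φ : ℝ → ℝ} {p : Measure ℝ} (hp : Integrable P.w p)
    (z z₁ z₂ : EReal) (hu : Measurable u) (hub : IsWeightBounded P.w u)
    (heq : ∀ x, u x = (iocR z₁ z₂).indicator φ x + P.β * ∫ y, u y ∂P.thrKer z x) :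
    ∫ x, u x ∂p = ∫ y in iocR z₁ z₂, φ y ∂P.occ z p := by
  rw [← integral_indicator (measurableSet_iocR z₁ z₂)]
  -- `P.occ z p` unfolds to `occMeasure P.β (P.thrKer z) p`.
  exact integral_eq_integral_occMeasure P.hw_meas (fun x => zero_le_one.trans (P.hw_one x))
    P.hβ0 (P.hβ0.trans P.hβγ) P.hγ1 (fun x => P.thrKer_apply z x ▸ P.hw_int _ x)
    (fun x => P.thrKer_apply z x ▸ P.hw_drift _ x) hp hu hub heq

lemma integral_sub_eq_setIntegral_occ_lower {R : ℝ → Bool → ℝ} {Φ : ℝ → EReal → ℝ}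
    (hΦ_meas : ∀ z, Measurable fun x => Φ x z) (hΦ_bdd : ∀ z, IsWeightBounded P.w fun x => Φ x z)
    (hΦ_eq : ∀ x z, Φ x z = P.actionValue R (Φ · z) (decide (z < x)) x)
    {p : Measure ℝ} (hp : Integrable P.w p) {z₁ z₂ : EReal} (h : z₁ < z₂) :
    ∫ x, Φ x z₁ ∂p - ∫ x, Φ x z₂ ∂p = ∫ y in iocR z₁ z₂, P.marginal R (Φ · z₂) y ∂P.occ z₁ p := by
  have hint : ∀ z a x, Integrable (Φ · z) (P.κ a x) := fun z a x =>
    (hΦ_bdd z).integrable (hΦ_meas z).aestronglyMeasurable (P.hw_int a x)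
  rw [← integral_sub ((hΦ_bdd z₁).integrable (hΦ_meas z₁).aestronglyMeasurable hp)
    ((hΦ_bdd z₂).integrable (hΦ_meas z₂).aestronglyMeasurable hp)]
  refine P.integral_eq_setIntegral_occ hp z₁ z₁ z₂ ((hΦ_meas z₁).sub (hΦ_meas z₂))
    ((hΦ_bdd z₁).sub (hΦ_bdd z₂)) fun x => ?_
  rw [hΦ_eq x z₁, hΦ_eq x z₂, P.actionValue_sub_actionValue_left (hint _ _ _) (hint _ _ _),
    sub_eq_indicator_iocR h (P.actionValue R (Φ · z₂)), thrKer_apply]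
  simp only [actionValue_true_sub_false]

lemma integral_sub_eq_setIntegral_occ_upper {R : ℝ → Bool → ℝ} {Φ : ℝ → EReal → ℝ}
    (hΦ_meas : ∀ z, Measurable fun x => Φ x z) (hΦ_bdd : ∀ z, IsWeightBounded P.w fun x => Φ x z)
    (hΦ_eq : ∀ x z, Φ x z = P.actionValue R (Φ · z) (decide (z < x)) x)
    {p : Measure ℝ} (hp : Integrable P.w p) {z₁ z₂ : EReal} (h : z₁ < z₂) :
    ∫ x, Φ x z₁ ∂p - ∫ x, Φ x z₂ ∂p = ∫ y in iocR z₁ z₂, P.marginal R (Φ · z₁) y ∂P.occ z₂ p := by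
  have hint : ∀ z a x, Integrable (Φ · z) (P.κ a x) := fun z a x =>
    (hΦ_bdd z).integrable (hΦ_meas z).aestronglyMeasurable (P.hw_int a x)
  rw [← integral_sub ((hΦ_bdd z₁).integrable (hΦ_meas z₁).aestronglyMeasurable hp)
    ((hΦ_bdd z₂).integrable (hΦ_meas z₂).aestronglyMeasurable hp)]
  refine P.integral_eq_setIntegral_occ hp z₂ z₁ z₂ ((hΦ_meas z₁).sub (hΦ_meas z₂))
    ((hΦ_bdd z₁).sub (hΦ_bdd z₂)) fun x => ?_
  rw [hΦ_eq x z₁, hΦ_eq x z₂, P.actionValue_sub_actionValue_right (hint _ _ _) (hint _ _ _),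
    sub_eq_indicator_iocR h (P.actionValue R (Φ · z₁)), thrKer_apply]
  simp only [actionValue_true_sub_false]

end Bandit

/-- Decomposition identities between threshold metrics and occupation measures:
for thresholds `−∞ ≤ z₁ < z₂ ≤ ∞`,
`F(p,z₁) − F(p,z₂) = ∫_{(z₁,z₂]} f(y,z₂) μ_p^{z₁}(dy) = ∫_{(z₁,z₂]} f(y,z₁) μ_p^{z₂}(dy)`,
and similarly for `G` and `g`. -/
theorem metric_difference_identities (P : Bandit) (p : Measure ℝ)
    (hp : P.IsInitDist p) (z₁ z₂ : EReal) (h : z₁ < z₂) :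
    (P.Fp p z₁ - P.Fp p z₂ = ∫ y in iocR z₁ z₂, P.f y z₂ ∂(P.occ z₁ p) ∧
      P.Fp p z₁ - P.Fp p z₂ = ∫ y in iocR z₁ z₂, P.f y z₁ ∂(P.occ z₂ p)) ∧
    (P.Gp p z₁ - P.Gp p z₂ = ∫ y in iocR z₁ z₂, P.g y z₂ ∂(P.occ z₁ p) ∧
      P.Gp p z₁ - P.Gp p z₂ = ∫ y in iocR z₁ z₂, P.g y z₁ ∂(P.occ z₂ p)) :=
  ⟨⟨P.integral_sub_eq_setIntegral_occ_lower P.hF_meas P.hF_bdd P.hF_eq hp.2 h,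
      P.integral_sub_eq_setIntegral_occ_upper P.hF_meas P.hF_bdd P.hF_eq hp.2 h⟩,
    ⟨P.integral_sub_eq_setIntegral_occ_lower P.hG_meas P.hG_bdd P.hG_eq hp.2 h,
      P.integral_sub_eq_setIntegral_occ_upper P.hG_meas P.hG_bdd P.hG_eq hp.2 h⟩⟩
end Occupation
end
end

section
/- Assume condition (PCLI1). Then for every initial distribution p on ℝ with ∫ w dp < ∞: (a) the function z ↦ G(p,z) is monotone nonincreasing on ℝ; (b) if p has full support ℝ, then z ↦ G(p,z) is strictly decreasing on ℝ. -/
open MeasureTheory ProbabilityTheory Filter Topology Set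

noncomputable section

namespace Bandit

lemma G_intg (P : Bandit) (z : EReal) (a : Bool) (x : ℝ) :
    MeasureTheory.Integrable (fun y => P.G y z) (P.κ a x) := by
  obtain ⟨C, hC⟩ := P.hG_bdd z
  exact (((P.hw_int a x).const_mul C).mono' ((P.hG_meas z).aestronglyMeasurable)
    (Filter.Eventually.of_forall fun y => by simpa using hC y))

lemma D_fixed (P : Bandit) (z₁ z₂ : EReal) (hz : z₁ ≤ z₂) (x : ℝ) :
    P.G x z₁ - P.G x z₂ =
      (if z₁ < (x : EReal) ∧ (x : EReal) ≤ z₂ then P.g x z₂ else 0) +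
        P.β * ∫ y, (P.G y z₁ - P.G y z₂) ∂(P.κ (decide (z₁ < (x : EReal))) x) := by
  have hsub : ∀ a : Bool, (∫ y, (P.G y z₁ - P.G y z₂) ∂(P.κ a x)) =
      (∫ y, P.G y z₁ ∂(P.κ a x)) - ∫ y, P.G y z₂ ∂(P.κ a x) := fun a =>
    integral_sub (P.G_intg z₁ a x) (P.G_intg z₂ a x)
  by_cases h1 : z₁ < (x : EReal)
  · by_cases h2 : (x : EReal) ≤ z₂
    · have hd1 : decide (z₁ < (x : EReal)) = true := decide_eq_true h1
      have hd2 : decide (z₂ < (x : EReal)) = false := decide_eq_false (not_lt.2 h2)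
      rw [if_pos ⟨h1, h2⟩, hd1, hsub, Bandit.g,
        P.hG_eq x z₁, P.hG_eq x z₂, hd1, hd2]
      ring
    · have h2' : z₂ < (x : EReal) := lt_of_not_ge h2
      have hd1 : decide (z₁ < (x : EReal)) = true := decide_eq_true h1
      have hd2 : decide (z₂ < (x : EReal)) = true := decide_eq_true h2'
      rw [if_neg (by tauto), hd1, hsub, P.hG_eq x z₁, P.hG_eq x z₂, hd1, hd2]
      ring
  · have h2 : ¬ z₂ < (x : EReal) := fun h => h1 (lt_of_le_of_lt hz h)
    have hd1 : decide (z₁ < (x : EReal)) = false := decide_eq_false h1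
    have hd2 : decide (z₂ < (x : EReal)) = false := decide_eq_false h2
    rw [if_neg (by tauto), hd1, hsub, P.hG_eq x z₁, P.hG_eq x z₂, hd1, hd2]
    ring

lemma G_diff_nonneg (P : Bandit) (h1 : P.PCLI1) (z₁ z₂ : EReal) (hz : z₁ ≤ z₂) (x : ℝ) :
    0 ≤ P.G x z₁ - P.G x z₂ := by
  obtain ⟨C₁, hC₁⟩ := P.hG_bdd z₁
  obtain ⟨C₂, hC₂⟩ := P.hG_bdd z₂
  set D : ℝ → ℝ := fun x => P.G x z₁ - P.G x z₂ with hDdef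
  have hwpos : ∀ x, (0:ℝ) < P.w x := fun x => lt_of_lt_of_le one_pos (P.hw_one x)
  have hbd : ∀ x, -(C₁ + C₂) ≤ D x / P.w x := by
    intro x
    rw [le_div_iff₀ (hwpos x)]
    have a1 := abs_le.1 (hC₁ x)
    have a2 := abs_le.1 (hC₂ x)
    simp only [hDdef]
    nlinarith [hwpos x]
  have hbdd : BddBelow (Set.range fun x => D x / P.w x) :=
    ⟨-(C₁ + C₂), by rintro _ ⟨x, rfl⟩; exact hbd x⟩
  set d : ℝ := ⨅ x, D x / P.w x with hd
  have hdw : ∀ x, d * P.w x ≤ D x := by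
    intro x
    have := ciInf_le hbdd x
    rwa [le_div_iff₀ (hwpos x)] at this
  have hIntD : ∀ (a : Bool) (x : ℝ), MeasureTheory.Integrable D (P.κ a x) := fun a x =>
    (P.G_intg z₁ a x).sub (P.G_intg z₂ a x)
  have hkey : ∀ x, d * P.γ * P.w x ≤ D x := by
    intro x
    have hfix := P.D_fixed z₁ z₂ hz x
    set a := decide (z₁ < (x : EReal)) with ha
    have hmono : d * (∫ y, P.w y ∂(P.κ a x)) ≤ ∫ y, D y ∂(P.κ a x) := by
      rw [← integral_const_mul]
      exact integral_mono ((P.hw_int a x).const_mul d) (hIntD a x) fun y => hdw y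
    have hβ : P.β * (d * ∫ y, P.w y ∂(P.κ a x)) ≤ P.β * ∫ y, D y ∂(P.κ a x) :=
      mul_le_mul_of_nonneg_left hmono P.hβ0
    have hdrift := P.hw_drift a x
    have hh : 0 ≤ (if z₁ < (x : EReal) ∧ (x : EReal) ≤ z₂ then P.g x z₂ else 0) := by
      split_ifs with h
      · exact (h1 x z₂).le
      · exact le_refl 0
    rcases le_or_gt 0 d with hd0 | hdneg
    · have hne : 0 ≤ d * P.w x * (1 - P.γ) :=
        mul_nonneg (mul_nonneg hd0 (hwpos x).le) (by linarith [P.hγ1])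
      have := hdw x
      nlinarith
    · have h2 : d * (P.β * ∫ y, P.w y ∂(P.κ a x)) ≥ d * (P.γ * P.w x) :=
        mul_le_mul_of_nonpos_left hdrift hdneg.le
      show d * P.γ * P.w x ≤ P.G x z₁ - P.G x z₂
      rw [hfix]
      nlinarith
  have hstep : ∀ x, d * P.γ ≤ D x / P.w x := by
    intro x
    rw [le_div_iff₀ (hwpos x)]
    exact hkey x
  have hγd : d * P.γ ≤ d := le_ciInf hstep
  have hd0 : 0 ≤ d := by nlinarith [P.hγ1, P.hβγ, P.hβ0]
  calc (0:ℝ) ≤ d * P.w x := mul_nonneg hd0 (hwpos x).le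
    _ ≤ D x := hdw x

lemma G_diff_ge_g (P : Bandit) (h1 : P.PCLI1) (z₁ z₂ : EReal) (hz : z₁ ≤ z₂) (x : ℝ)
    (hx1 : z₁ < (x : EReal)) (hx2 : (x : EReal) ≤ z₂) :
    P.g x z₂ ≤ P.G x z₁ - P.G x z₂ := by
  have hfix := P.D_fixed z₁ z₂ hz x
  rw [if_pos ⟨hx1, hx2⟩] at hfix
  have hint : 0 ≤ ∫ y, (P.G y z₁ - P.G y z₂) ∂(P.κ (decide (z₁ < (x : EReal))) x) :=
    integral_nonneg fun y => P.G_diff_nonneg h1 z₁ z₂ hz y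
  nlinarith [P.hβ0]

lemma G_intg_p (P : Bandit) (z : EReal) (p : Measure ℝ) (hp : P.IsInitDist p) :
    MeasureTheory.Integrable (fun x => P.G x z) p := by
  obtain ⟨C, hC⟩ := P.hG_bdd z
  exact ((hp.2.const_mul C).mono' ((P.hG_meas z).aestronglyMeasurable)
    (Filter.Eventually.of_forall fun y => by simpa using hC y))

end Bandit

/-- Under (PCLI1), the resource metric `G(p,·)` is nonincreasing in the
threshold, and strictly decreasing if `p` has full support. -/
theorem resource_metric_antitone (P : Bandit) (h1 : P.PCLI1) :
    (∀ p : Measure ℝ, P.IsInitDist p → Antitone fun z : ℝ => P.Gp p z) ∧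
    (∀ p : Measure ℝ, P.IsInitDist p →
      (∀ s : Set ℝ, IsOpen s → s.Nonempty → 0 < p s) →
      StrictAnti fun z : ℝ => P.Gp p z) := by
  constructor
  · intro p hp z₁ z₂ hz
    simp only
    have hzE : (z₁ : EReal) ≤ (z₂ : EReal) := EReal.coe_le_coe_iff.2 hz
    unfold Bandit.Gp
    have := MeasureTheory.integral_mono (P.G_intg_p z₂ p hp) (P.G_intg_p z₁ p hp)
      (fun x => by linarith [P.G_diff_nonneg h1 z₁ z₂ hzE x])
    exact this
  · intro p hp hsupp z₁ z₂ hz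
    simp only
    have hzE : (z₁ : EReal) ≤ (z₂ : EReal) := EReal.coe_le_coe_iff.2 hz.le
    set D : ℝ → ℝ := fun x => P.G x z₁ - P.G x z₂ with hDdef
    have hIntD : MeasureTheory.Integrable D p :=
      (P.G_intg_p z₁ p hp).sub (P.G_intg_p z₂ p hp)
    have hDnn : 0 ≤ D := fun x => P.G_diff_nonneg h1 z₁ z₂ hzE x
    have hpos : 0 < ∫ x, D x ∂p := by
      rw [MeasureTheory.integral_pos_iff_support_of_nonneg hDnn hIntD]
      have hsub : Set.Ioo z₁ z₂ ⊆ Function.support D := by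
        intro x hx
        have h1x : (z₁ : EReal) < (x : EReal) := EReal.coe_lt_coe_iff.2 hx.1
        have h2x : (x : EReal) ≤ (z₂ : EReal) := EReal.coe_le_coe_iff.2 hx.2.le
        have := P.G_diff_ge_g h1 z₁ z₂ hzE x h1x h2x
        have hg := h1 x z₂
        exact fun h0 => by simp only [hDdef] at h0; rw [h0] at this; linarith
      calc (0:ENNReal) < p (Set.Ioo z₁ z₂) :=
            hsupp _ isOpen_Ioo (Set.nonempty_Ioo.2 hz)
        _ ≤ p (Function.support D) := measure_mono hsub
    have heq : (∫ x, D x ∂p) = P.Gp p z₁ - P.Gp p z₂ :=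
      MeasureTheory.integral_sub (P.G_intg_p z₁ p hp) (P.G_intg_p z₂ p hp)
    linarith [heq ▸ hpos]
end
end
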